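/- arXiv:2405.12345 — 3 statements merged into one kernel-verified Lean document; each statement's English description precedes it below -/
import Mathlib

section
/- Let φ, φ₁, φ₂ be as in the operator T with ‖φ‖, ‖φ₁‖, ‖φ₂‖ denoting their Lipschitz-space norms (‖g‖ = |g(0)| + Lip(g)). Then for all f, g ∈ D^{0,1}[0,1], ‖Tf - Tg‖ ≤ 2‖φ‖(‖φ₁‖ - φ₁(0) + ‖φ₂‖)·‖f - g‖. -/
/-- The optimal Lipschitz constant of `f` on `[0,1]`. -/
noncomputable def lipConst (f : ℝ → ℝ) : ℝ :=
  sInf {K : ℝ | 0 ≤ K ∧ ∀ x ∈ Set.Icc (0:ℝ) 1, ∀ y ∈ Set.Icc (0:ℝ) 1,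
    |f x - f y| ≤ K * |x - y|}

/-- The norm of the Lipschitz space `H₁[0,1]`: `‖f‖ = |f 0| + Lip f`. -/
noncomputable def normH (f : ℝ → ℝ) : ℝ := |f 0| + lipConst f

lemma lipSet_nonempty {f : ℝ → ℝ}
    (h : ∃ K : ℝ, ∀ x ∈ Set.Icc (0:ℝ) 1, ∀ y ∈ Set.Icc (0:ℝ) 1,
      |f x - f y| ≤ K * |x - y|) :
    {K : ℝ | 0 ≤ K ∧ ∀ x ∈ Set.Icc (0:ℝ) 1, ∀ y ∈ Set.Icc (0:ℝ) 1,
      |f x - f y| ≤ K * |x - y|}.Nonempty := by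
  obtain ⟨K, hK⟩ := h
  exact ⟨max K 0, le_max_right _ _, fun x hx y hy =>
    (hK x hx y hy).trans (mul_le_mul_of_nonneg_right (le_max_left _ _) (abs_nonneg _))⟩

lemma lipSet_bddBelow (f : ℝ → ℝ) :
    BddBelow {K : ℝ | 0 ≤ K ∧ ∀ x ∈ Set.Icc (0:ℝ) 1, ∀ y ∈ Set.Icc (0:ℝ) 1,
      |f x - f y| ≤ K * |x - y|} := ⟨0, fun _ hK => hK.1⟩

lemma lipConst_nonneg {f : ℝ → ℝ}
    (h : ∃ K : ℝ, ∀ x ∈ Set.Icc (0:ℝ) 1, ∀ y ∈ Set.Icc (0:ℝ) 1,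
      |f x - f y| ≤ K * |x - y|) : 0 ≤ lipConst f :=
  le_csInf (lipSet_nonempty h) (fun _ hK => hK.1)

lemma lipConst_le {f : ℝ → ℝ} {K : ℝ} (hK0 : 0 ≤ K)
    (hK : ∀ x ∈ Set.Icc (0:ℝ) 1, ∀ y ∈ Set.Icc (0:ℝ) 1,
      |f x - f y| ≤ K * |x - y|) : lipConst f ≤ K :=
  csInf_le (lipSet_bddBelow f) ⟨hK0, hK⟩

lemma lipConst_spec {f : ℝ → ℝ}
    (h : ∃ K : ℝ, ∀ x ∈ Set.Icc (0:ℝ) 1, ∀ y ∈ Set.Icc (0:ℝ) 1,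
      |f x - f y| ≤ K * |x - y|) :
    ∀ x ∈ Set.Icc (0:ℝ) 1, ∀ y ∈ Set.Icc (0:ℝ) 1,
      |f x - f y| ≤ lipConst f * |x - y| := by
  intro x hx y hy
  rcases eq_or_ne x y with rfl | hxy
  · simp
  · have hxy' : 0 < |x - y| := abs_pos.2 (sub_ne_zero.2 hxy)
    rw [← div_le_iff₀ hxy']
    refine le_csInf (lipSet_nonempty h) (fun K hK => ?_)
    rw [div_le_iff₀ hxy']
    exact hK.2 x hx y hy

theorem T_contraction_estimate
    (φ φ₁ φ₂ f g : ℝ → ℝ)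
    (hφ : ∃ K : ℝ, ∀ x ∈ Set.Icc (0:ℝ) 1, ∀ y ∈ Set.Icc (0:ℝ) 1,
      |φ x - φ y| ≤ K * |x - y|)
    (hφ0 : φ 0 = 0) (hφ1 : φ 1 = 1)
    (hφ₁maps : ∀ x ∈ Set.Icc (0:ℝ) 1, φ₁ x ∈ Set.Icc (0:ℝ) 1)
    (hφ₂maps : ∀ x ∈ Set.Icc (0:ℝ) 1, φ₂ x ∈ Set.Icc (0:ℝ) 1)
    (hφ₁ : ∃ K : ℝ, ∀ x ∈ Set.Icc (0:ℝ) 1, ∀ y ∈ Set.Icc (0:ℝ) 1,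
      |φ₁ x - φ₁ y| ≤ K * |x - y|)
    (hφ₂ : ∃ K : ℝ, ∀ x ∈ Set.Icc (0:ℝ) 1, ∀ y ∈ Set.Icc (0:ℝ) 1,
      |φ₂ x - φ₂ y| ≤ K * |x - y|)
    (hφ₁1 : φ₁ 1 = 1) (hφ₂0 : φ₂ 0 = 0)
    (hf : ∃ K : ℝ, ∀ x ∈ Set.Icc (0:ℝ) 1, ∀ y ∈ Set.Icc (0:ℝ) 1,
      |f x - f y| ≤ K * |x - y|)
    (hf0 : f 0 = 0) (hf1 : f 1 = 1)
    (hg : ∃ K : ℝ, ∀ x ∈ Set.Icc (0:ℝ) 1, ∀ y ∈ Set.Icc (0:ℝ) 1,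
      |g x - g y| ≤ K * |x - y|)
    (hg0 : g 0 = 0) (hg1 : g 1 = 1) :
    normH (fun x =>
        (φ x * f (φ₁ x) + (1 - φ x) * f (φ₂ x)) -
          (φ x * g (φ₁ x) + (1 - φ x) * g (φ₂ x))) ≤
      2 * normH φ * (normH φ₁ - φ₁ 0 + normH φ₂) * normH (fun x => f x - g x) := by
  have h01 : (0:ℝ) ∈ Set.Icc (0:ℝ) 1 := by constructor <;> norm_num
  have h11 : (1:ℝ) ∈ Set.Icc (0:ℝ) 1 := by constructor <;> norm_num
  set h : ℝ → ℝ := fun x => f x - g x with hh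
  have hhL : ∃ K : ℝ, ∀ x ∈ Set.Icc (0:ℝ) 1, ∀ y ∈ Set.Icc (0:ℝ) 1,
      |h x - h y| ≤ K * |x - y| := by
    obtain ⟨Kf, hKf⟩ := hf
    obtain ⟨Kg, hKg⟩ := hg
    refine ⟨Kf + Kg, fun x hx y hy => ?_⟩
    have : h x - h y = (f x - f y) - (g x - g y) := by simp [hh]; ring
    rw [this, add_mul]
    exact (abs_sub _ _).trans (add_le_add (hKf x hx y hy) (hKg x hx y hy))
  set Lφ := lipConst φ
  set L1 := lipConst φ₁
  set L2 := lipConst φ₂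
  set Lh := lipConst h
  have hLφ0 : 0 ≤ Lφ := lipConst_nonneg hφ
  have hL10 : 0 ≤ L1 := lipConst_nonneg hφ₁
  have hL20 : 0 ≤ L2 := lipConst_nonneg hφ₂
  have hLh0 : 0 ≤ Lh := lipConst_nonneg hhL
  have sφ := lipConst_spec hφ
  have s1 := lipConst_spec hφ₁
  have s2 := lipConst_spec hφ₂
  have sh := lipConst_spec hhL
  have habs1 : ∀ z ∈ Set.Icc (0:ℝ) 1, |z| ≤ 1 := fun z hz =>
    abs_le.2 ⟨by linarith [hz.1], hz.2⟩
  -- bounds on φ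
  have hφbd : ∀ x ∈ Set.Icc (0:ℝ) 1, |φ x| ≤ Lφ := by
    intro x hx
    have := sφ x hx 0 h01
    rw [hφ0, sub_zero, sub_zero] at this
    calc |φ x| ≤ Lφ * |x| := this
    _ ≤ Lφ * 1 := mul_le_mul_of_nonneg_left (habs1 x hx) hLφ0
    _ = Lφ := mul_one _
  have hφbd' : ∀ x ∈ Set.Icc (0:ℝ) 1, |1 - φ x| ≤ Lφ := by
    intro x hx
    have := sφ 1 h11 x hx
    rw [hφ1] at this
    calc |1 - φ x| ≤ Lφ * |1 - x| := this
    _ ≤ Lφ * 1 := mul_le_mul_of_nonneg_left (abs_le.2 ⟨by linarith [hx.2], by linarith [hx.1]⟩) hLφ0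
    _ = Lφ := mul_one _
  have hh1 : h 1 = 0 := by simp [hh, hf1, hg1]
  have hh0 : h 0 = 0 := by simp [hh, hf0, hg0]
  -- |h(φ₁ y)| ≤ Lh * L1
  have hhb1 : ∀ y ∈ Set.Icc (0:ℝ) 1, |h (φ₁ y)| ≤ Lh * L1 := by
    intro y hy
    have t1 := sh (φ₁ y) (hφ₁maps y hy) 1 h11
    rw [hh1, sub_zero] at t1
    have t2 := s1 y hy 1 h11
    rw [hφ₁1] at t2
    have t3 : |y - 1| ≤ 1 := abs_le.2 ⟨by linarith [hy.1], by linarith [hy.2]⟩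
    calc |h (φ₁ y)| ≤ Lh * |φ₁ y - 1| := t1
    _ ≤ Lh * (L1 * |y - 1|) := mul_le_mul_of_nonneg_left t2 hLh0
    _ ≤ Lh * (L1 * 1) := by
        exact mul_le_mul_of_nonneg_left (mul_le_mul_of_nonneg_left t3 hL10) hLh0
    _ = Lh * L1 := by ring
  have hhb2 : ∀ y ∈ Set.Icc (0:ℝ) 1, |h (φ₂ y)| ≤ Lh * L2 := by
    intro y hy
    have t1 := sh (φ₂ y) (hφ₂maps y hy) 0 h01
    rw [hh0, sub_zero] at t1
    have t2 := s2 y hy 0 h01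
    rw [hφ₂0, sub_zero, sub_zero] at t2
    have t3 : |y| ≤ 1 := habs1 _ hy
    calc |h (φ₂ y)| ≤ Lh * |φ₂ y - 0| := t1
    _ = Lh * |φ₂ y| := by rw [sub_zero]
    _ ≤ Lh * (L2 * |y|) := mul_le_mul_of_nonneg_left t2 hLh0
    _ ≤ Lh * (L2 * 1) := by
        exact mul_le_mul_of_nonneg_left (mul_le_mul_of_nonneg_left t3 hL20) hLh0
    _ = Lh * L2 := by ring
  set F : ℝ → ℝ := fun x =>
      (φ x * f (φ₁ x) + (1 - φ x) * f (φ₂ x)) -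
        (φ x * g (φ₁ x) + (1 - φ x) * g (φ₂ x)) with hF
  -- key pointwise estimate
  have key : ∀ x ∈ Set.Icc (0:ℝ) 1, ∀ y ∈ Set.Icc (0:ℝ) 1,
      |F x - F y| ≤ (2 * Lφ * (L1 + L2) * Lh) * |x - y| := by
    intro x hx y hy
    have e : F x - F y =
        φ x * (h (φ₁ x) - h (φ₁ y)) + (φ x - φ y) * h (φ₁ y)
        + ((1 - φ x) * (h (φ₂ x) - h (φ₂ y)) + (φ y - φ x) * h (φ₂ y)) := by
      simp only [hF, hh]; ring
    have b1 : |φ x * (h (φ₁ x) - h (φ₁ y))| ≤ Lφ * (Lh * (L1 * |x - y|)) := by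
      rw [abs_mul]
      refine mul_le_mul (hφbd x hx) ?_ (abs_nonneg _) hLφ0
      calc |h (φ₁ x) - h (φ₁ y)| ≤ Lh * |φ₁ x - φ₁ y| :=
            sh _ (hφ₁maps x hx) _ (hφ₁maps y hy)
      _ ≤ Lh * (L1 * |x - y|) := mul_le_mul_of_nonneg_left (s1 x hx y hy) hLh0
    have b2 : |(φ x - φ y) * h (φ₁ y)| ≤ (Lφ * |x - y|) * (Lh * L1) := by
      rw [abs_mul]
      exact mul_le_mul (sφ x hx y hy) (hhb1 y hy) (abs_nonneg _)
        (by positivity)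
    have b3 : |(1 - φ x) * (h (φ₂ x) - h (φ₂ y))| ≤ Lφ * (Lh * (L2 * |x - y|)) := by
      rw [abs_mul]
      refine mul_le_mul (hφbd' x hx) ?_ (abs_nonneg _) hLφ0
      calc |h (φ₂ x) - h (φ₂ y)| ≤ Lh * |φ₂ x - φ₂ y| :=
            sh _ (hφ₂maps x hx) _ (hφ₂maps y hy)
      _ ≤ Lh * (L2 * |x - y|) := mul_le_mul_of_nonneg_left (s2 x hx y hy) hLh0
    have b4 : |(φ y - φ x) * h (φ₂ y)| ≤ (Lφ * |x - y|) * (Lh * L2) := by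
      rw [abs_mul]
      have : |φ y - φ x| ≤ Lφ * |x - y| := by
        rw [abs_sub_comm]; exact sφ x hx y hy
      exact mul_le_mul this (hhb2 y hy) (abs_nonneg _) (by positivity)
    calc |F x - F y| ≤ |φ x * (h (φ₁ x) - h (φ₁ y)) + (φ x - φ y) * h (φ₁ y)|
          + |(1 - φ x) * (h (φ₂ x) - h (φ₂ y)) + (φ y - φ x) * h (φ₂ y)| := by
          rw [e]; exact abs_add_le _ _
    _ ≤ (|φ x * (h (φ₁ x) - h (φ₁ y))| + |(φ x - φ y) * h (φ₁ y)|)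
          + (|(1 - φ x) * (h (φ₂ x) - h (φ₂ y))| + |(φ y - φ x) * h (φ₂ y)|) :=
          add_le_add (abs_add_le _ _) (abs_add_le _ _)
    _ ≤ (Lφ * (Lh * (L1 * |x - y|)) + (Lφ * |x - y|) * (Lh * L1))
          + (Lφ * (Lh * (L2 * |x - y|)) + (Lφ * |x - y|) * (Lh * L2)) :=
          add_le_add (add_le_add b1 b2) (add_le_add b3 b4)
    _ = (2 * Lφ * (L1 + L2) * Lh) * |x - y| := by ring
  -- compute the norms
  have hF0 : F 0 = 0 := by
    simp [hF, hφ0, hφ₂0, hf0, hg0]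
  have hφ₁0 : φ₁ 0 ∈ Set.Icc (0:ℝ) 1 := hφ₁maps 0 h01
  have hnφ : normH φ = Lφ := by simp [normH, hφ0]; rfl
  have hnφ₁ : normH φ₁ - φ₁ 0 = L1 := by
    simp [normH, abs_of_nonneg hφ₁0.1]; rfl
  have hnφ₂ : normH φ₂ = L2 := by simp [normH, hφ₂0]; rfl
  have hnh : normH h = Lh := by
    have : h 0 = 0 := hh0
    simp [normH, this]; rfl
  have hnF : normH F = lipConst F := by simp [normH, hF0]
  have final : lipConst F ≤ 2 * Lφ * (L1 + L2) * Lh :=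
    lipConst_le (by positivity) key
  calc normH F = lipConst F := hnF
  _ ≤ 2 * Lφ * (L1 + L2) * Lh := final
  _ = 2 * normH φ * (normH φ₁ - φ₁ 0 + normH φ₂) * normH h := by
      rw [hnφ, hnφ₁, hnφ₂, hnh]
end

section
/- If 0 < α ≤ β < 1 and 4β < 1, then the functional equation f(x) = x·f(αx + 1 - α) + (1 - x)·f(βx) for x ∈ [0,1] has a unique solution f in the set of Lipschitz functions on [0,1] satisfying f(0)=0 and f(1)=1. -/
open BoundedContinuousFunction Filter

noncomputable def pfClamp (x : ℝ) : ℝ := max 0 (min 1 x)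

lemma pfClamp_nonneg (x : ℝ) : 0 ≤ pfClamp x := le_max_left _ _

lemma pfClamp_le_one (x : ℝ) : pfClamp x ≤ 1 :=
  max_le zero_le_one (min_le_left _ _)

lemma pfClamp_continuous : Continuous pfClamp :=
  continuous_const.max (continuous_const.min continuous_id)

lemma pfClamp_eq {x : ℝ} (h0 : 0 ≤ x) (h1 : x ≤ 1) : pfClamp x = x := by
  unfold pfClamp
  rw [min_eq_right h1, max_eq_right h0]

lemma pfClamp_lip (x y : ℝ) : |pfClamp x - pfClamp y| ≤ |x - y| := by
  have h1 : |min 1 x - min 1 y| ≤ |x - y| :=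
    (abs_min_sub_min_le_max 1 x 1 y).trans (max_le (by simp [abs_nonneg]) le_rfl)
  exact (abs_max_sub_max_le_max 0 (min 1 x) 0 (min 1 y)).trans
    (max_le (by simpa using abs_nonneg (x - y)) h1)

noncomputable def pfPhiFun (α β : ℝ) (u : ℝ →ᵇ ℝ) (x : ℝ) : ℝ :=
  (β - α) + α * (α * pfClamp x + 1 - α) * u (α * pfClamp x + 1 - α)
    + β * (1 - β * pfClamp x) * u (β * pfClamp x)

lemma pfPhiFun_continuous (α β : ℝ) (u : ℝ →ᵇ ℝ) : Continuous (pfPhiFun α β u) := by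
  have hc1 : Continuous fun x : ℝ => α * pfClamp x + 1 - α :=
    ((continuous_const.mul pfClamp_continuous).add continuous_const).sub continuous_const
  have hc2 : Continuous fun x : ℝ => β * pfClamp x := continuous_const.mul pfClamp_continuous
  exact (continuous_const.add ((continuous_const.mul hc1).mul (u.continuous.comp hc1))).add
    ((continuous_const.mul (continuous_const.sub hc2)).mul (u.continuous.comp hc2))

lemma pf_mulabs {c X D : ℝ} (hc : 0 ≤ c) (hX : |X| ≤ D) : |c * X| ≤ c * D := by
  rw [abs_mul, abs_of_nonneg hc]
  exact mul_le_mul_of_nonneg_left hX hc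

noncomputable def pfPhi (α β : ℝ) (hα : 0 ≤ α) (hαβ : α ≤ β) (hβ : β ≤ 1) (u : ℝ →ᵇ ℝ) :
    ℝ →ᵇ ℝ :=
  BoundedContinuousFunction.ofNormedAddCommGroup (pfPhiFun α β u) (pfPhiFun_continuous α β u)
    ((β - α) + (α + β) * ‖u‖) (by
      intro x
      have ht0 := pfClamp_nonneg x
      have ht1 := pfClamp_le_one x
      set t := pfClamp x with htdef
      have hα1 : α ≤ 1 := le_trans hαβ hβ
      have h1 : |u (α * t + 1 - α)| ≤ ‖u‖ := u.norm_coe_le_norm _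
      have h2 : |u (β * t)| ≤ ‖u‖ := u.norm_coe_le_norm _
      have hu0 : 0 ≤ ‖u‖ := norm_nonneg u
      have hy0 : 0 ≤ α * t + 1 - α := by nlinarith [mul_nonneg hα ht0]
      have hy1 : α * t + 1 - α ≤ 1 := by nlinarith [mul_le_of_le_one_right hα ht1]
      have hz0 : 0 ≤ β * t := mul_nonneg (le_trans hα hαβ) ht0
      have hz1 : β * t ≤ 1 := le_trans (mul_le_of_le_one_right (le_trans hα hαβ) ht1) hβ
      have hA : |α * (α * t + 1 - α) * u (α * t + 1 - α)| ≤ α * ‖u‖ := by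
        refine le_trans (pf_mulabs (mul_nonneg hα hy0) h1) ?_
        nlinarith [mul_le_mul_of_nonneg_right (mul_le_of_le_one_right hα hy1) hu0]
      have hB : |β * (1 - β * t) * u (β * t)| ≤ β * ‖u‖ := by
        have hβ0 : 0 ≤ β := le_trans hα hαβ
        refine le_trans (pf_mulabs (mul_nonneg hβ0 (by linarith)) h2) ?_
        nlinarith [mul_le_mul_of_nonneg_right (mul_le_of_le_one_right hβ0 (by linarith : 1 - β * t ≤ 1)) hu0]
      have habs : ‖pfPhiFun α β u x‖ ≤ |(β - α)| + (|α * (α * t + 1 - α) * u (α * t + 1 - α)| +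
          |β * (1 - β * t) * u (β * t)|) := by
        rw [Real.norm_eq_abs]
        unfold pfPhiFun
        rw [← htdef]
        calc |(β - α) + α * (α * t + 1 - α) * u (α * t + 1 - α)
            + β * (1 - β * t) * u (β * t)|
            ≤ |(β - α) + α * (α * t + 1 - α) * u (α * t + 1 - α)|
              + |β * (1 - β * t) * u (β * t)| := abs_add_le _ _
          _ ≤ _ := by
              have := abs_add_le (β - α) (α * (α * t + 1 - α) * u (α * t + 1 - α))
              linarith
      rw [abs_of_nonneg (by linarith)] at habs
      nlinarith)

lemma pfPhi_coe (α β : ℝ) (hα : 0 ≤ α) (hαβ : α ≤ β) (hβ : β ≤ 1) (u : ℝ →ᵇ ℝ) (x : ℝ) :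
    pfPhi α β hα hαβ hβ u x = pfPhiFun α β u x := rfl

set_option maxHeartbeats 1000000 in
theorem paradise_fish_existence_uniqueness
    (α β : ℝ) (hα : 0 < α) (hαβ : α ≤ β) (hβ : β < 1) (h4β : 4 * β < 1) :
    ∃ f : ℝ → ℝ,
      ((∃ K : ℝ, ∀ x ∈ Set.Icc (0:ℝ) 1, ∀ y ∈ Set.Icc (0:ℝ) 1,
          |f x - f y| ≤ K * |x - y|) ∧ f 0 = 0 ∧ f 1 = 1 ∧
        ∀ x ∈ Set.Icc (0:ℝ) 1,
          f x = x * f (α * x + 1 - α) + (1 - x) * f (β * x)) ∧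
      ∀ g : ℝ → ℝ,
        ((∃ K : ℝ, ∀ x ∈ Set.Icc (0:ℝ) 1, ∀ y ∈ Set.Icc (0:ℝ) 1,
            |g x - g y| ≤ K * |x - y|) ∧ g 0 = 0 ∧ g 1 = 1 ∧
          ∀ x ∈ Set.Icc (0:ℝ) 1,
            g x = x * g (α * x + 1 - α) + (1 - x) * g (β * x)) →
        ∀ x ∈ Set.Icc (0:ℝ) 1, g x = f x := by
  have hβ0 : (0:ℝ) < β := lt_of_lt_of_le hα hαβ
  have hab : 2 * (α * α + β * β) ≤ 1 := by nlinarith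
  have hα1 : α < 1 := lt_of_le_of_lt hαβ hβ
  have hγ1 : α + β < 1 := by linarith
  have hγ0 : (0:ℝ) ≤ α + β := by linarith
  set γ : ℝ := α + β with hγdef
  have h1γ : (0:ℝ) < 1 - γ := by simp only [hγdef]; linarith
  set M : ℝ := (β - α) / (1 - γ) with hMdef
  have hM0 : 0 ≤ M := div_nonneg (by linarith) (le_of_lt h1γ)
  have hMeq : (β - α) + γ * M = M := by
    rw [hMdef]; field_simp; ring
  set Φ : (ℝ →ᵇ ℝ) → (ℝ →ᵇ ℝ) := pfPhi α β hα.le hαβ hβ.le with hΦdef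
  have hcoe : ∀ (u : ℝ →ᵇ ℝ) (x : ℝ), Φ u x = pfPhiFun α β u x := fun u x => rfl
  -- contraction estimate
  have hdist : ∀ u v : ℝ →ᵇ ℝ, dist (Φ u) (Φ v) ≤ γ * dist u v := by
    intro u v
    rw [BoundedContinuousFunction.dist_le (by positivity)]
    intro x
    rw [Real.dist_eq, hcoe, hcoe]
    have ht0 := pfClamp_nonneg x
    have ht1 := pfClamp_le_one x
    set t := pfClamp x with htdef
    have hy0 : 0 ≤ α * t + 1 - α := by nlinarith [mul_nonneg hα.le ht0]
    have hy1 : α * t + 1 - α ≤ 1 := by nlinarith [mul_le_of_le_one_right hα.le ht1]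
    have hz0 : 0 ≤ β * t := mul_nonneg hβ0.le ht0
    have hz1 : β * t ≤ 1 := le_trans (mul_le_of_le_one_right hβ0.le ht1) hβ.le
    have h1 : |u (α * t + 1 - α) - v (α * t + 1 - α)| ≤ dist u v := by
      rw [← Real.dist_eq]; exact BoundedContinuousFunction.dist_coe_le_dist _
    have h2 : |u (β * t) - v (β * t)| ≤ dist u v := by
      rw [← Real.dist_eq]; exact BoundedContinuousFunction.dist_coe_le_dist _
    have hd0 : 0 ≤ dist u v := dist_nonneg
    have hE : pfPhiFun α β u x - pfPhiFun α β v x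
        = α * (α * t + 1 - α) * (u (α * t + 1 - α) - v (α * t + 1 - α))
          + β * (1 - β * t) * (u (β * t) - v (β * t)) := by
      simp only [pfPhiFun, ← htdef]; ring
    rw [hE]
    have hA := pf_mulabs (mul_nonneg hα.le hy0) h1
    have hB := pf_mulabs (mul_nonneg hβ0.le (by linarith : (0:ℝ) ≤ 1 - β * t)) h2
    calc |α * (α * t + 1 - α) * (u (α * t + 1 - α) - v (α * t + 1 - α))
        + β * (1 - β * t) * (u (β * t) - v (β * t))|
        ≤ |α * (α * t + 1 - α) * (u (α * t + 1 - α) - v (α * t + 1 - α))|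
          + |β * (1 - β * t) * (u (β * t) - v (β * t))| := abs_add_le _ _
      _ ≤ γ * dist u v := by
          have c1 : α * (α * t + 1 - α) * dist u v ≤ α * dist u v :=
            mul_le_mul_of_nonneg_right (mul_le_of_le_one_right hα.le hy1) hd0
          have c2 : β * (1 - β * t) * dist u v ≤ β * dist u v :=
            mul_le_mul_of_nonneg_right (mul_le_of_le_one_right hβ0.le (by linarith)) hd0
          simp only [hγdef]
          rw [add_mul]
          linarith
  -- invariance of bound and Lipschitz property under Φ
  have hstep : ∀ u : ℝ →ᵇ ℝ, (∀ p, |u p| ≤ M) → (∀ p q, |u p - u q| ≤ M * |p - q|) →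
      (∀ p, |Φ u p| ≤ M) ∧ (∀ p q, |Φ u p - Φ u q| ≤ M * |p - q|) := by
    intro u hub hul
    constructor
    · intro p
      rw [hcoe]
      have ht0 := pfClamp_nonneg p
      have ht1 := pfClamp_le_one p
      set t := pfClamp p with htdef
      have hy0 : 0 ≤ α * t + 1 - α := by nlinarith [mul_nonneg hα.le ht0]
      have hy1 : α * t + 1 - α ≤ 1 := by nlinarith [mul_le_of_le_one_right hα.le ht1]
      have hz0 : 0 ≤ β * t := mul_nonneg hβ0.le ht0
      have hz1 : β * t ≤ 1 := le_trans (mul_le_of_le_one_right hβ0.le ht1) hβ.le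
      have hA := pf_mulabs (mul_nonneg hα.le hy0) (hub (α * t + 1 - α))
      have hB := pf_mulabs (mul_nonneg hβ0.le (by linarith : (0:ℝ) ≤ 1 - β * t)) (hub (β * t))
      have c1 : α * (α * t + 1 - α) * M ≤ α * M :=
        mul_le_mul_of_nonneg_right (mul_le_of_le_one_right hα.le hy1) hM0
      have c2 : β * (1 - β * t) * M ≤ β * M :=
        mul_le_mul_of_nonneg_right (mul_le_of_le_one_right hβ0.le (by linarith)) hM0
      have habs : |pfPhiFun α β u p| ≤ (β - α) + (α * (α * t + 1 - α) * M + β * (1 - β * t) * M) := by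
        simp only [pfPhiFun, ← htdef]
        calc |β - α + α * (α * t + 1 - α) * u (α * t + 1 - α) + β * (1 - β * t) * u (β * t)|
            ≤ |β - α + α * (α * t + 1 - α) * u (α * t + 1 - α)| + |β * (1 - β * t) * u (β * t)| :=
              abs_add_le _ _
          _ ≤ _ := by
              have h3 := abs_add_le (β - α) (α * (α * t + 1 - α) * u (α * t + 1 - α))
              have h4 : |β - α| = β - α := abs_of_nonneg (by linarith)
              linarith
      have hMeq2 : β - α + (α * M + β * M) = M := by
        simp only [hγdef] at hMeq; linear_combination hMeq
      linarith [habs, c1, c2, hMeq2]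
    · intro p q
      rw [hcoe, hcoe]
      have hclip := pfClamp_lip p q
      have ht0 := pfClamp_nonneg p
      have ht1 := pfClamp_le_one p
      have hs0 := pfClamp_nonneg q
      have hs1 := pfClamp_le_one q
      set t := pfClamp p with htdef
      set s := pfClamp q with hsdef
      have hy0 : 0 ≤ α * t + 1 - α := by nlinarith [mul_nonneg hα.le ht0]
      have hy1 : α * t + 1 - α ≤ 1 := by nlinarith [mul_le_of_le_one_right hα.le ht1]
      have hy0' : 0 ≤ α * s + 1 - α := by nlinarith [mul_nonneg hα.le hs0]
      have hy1' : α * s + 1 - α ≤ 1 := by nlinarith [mul_le_of_le_one_right hα.le hs1]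
      have hz0' : 0 ≤ β * s := mul_nonneg hβ0.le hs0
      have hz1' : β * s ≤ 1 := le_trans (mul_le_of_le_one_right hβ0.le hs1) hβ.le
      -- decompose
      have hE : pfPhiFun α β u p - pfPhiFun α β u q
          = α * ((α * (t - s)) * u (α * t + 1 - α))
            + α * ((α * s + 1 - α) * (u (α * t + 1 - α) - u (α * s + 1 - α)))
            + β * ((β * (s - t)) * u (β * t))
            + β * ((1 - β * s) * (u (β * t) - u (β * s))) := by
        simp only [pfPhiFun, ← htdef, ← hsdef]; ring
      have hT1 : |α * ((α * (t - s)) * u (α * t + 1 - α))| ≤ α * (α * |t - s| * M) := by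
        refine pf_mulabs hα.le ?_
        calc |α * (t - s) * u (α * t + 1 - α)| = |α * (t - s)| * |u (α * t + 1 - α)| :=
              abs_mul _ _
          _ ≤ α * |t - s| * M := by
              rw [abs_mul, abs_of_nonneg hα.le]
              exact mul_le_mul_of_nonneg_left (hub _) (by positivity)
      have hT2 : |α * ((α * s + 1 - α) * (u (α * t + 1 - α) - u (α * s + 1 - α)))|
          ≤ α * (M * (α * |t - s|)) := by
        refine pf_mulabs hα.le ?_
        have hdarg : |(α * t + 1 - α) - (α * s + 1 - α)| = α * |t - s| := by
          rw [show (α * t + 1 - α) - (α * s + 1 - α) = α * (t - s) by ring, abs_mul,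
            abs_of_nonneg hα.le]
        have := hul (α * t + 1 - α) (α * s + 1 - α)
        rw [hdarg] at this
        calc |(α * s + 1 - α) * (u (α * t + 1 - α) - u (α * s + 1 - α))|
            ≤ (α * s + 1 - α) * (M * (α * |t - s|)) := by
              rw [abs_mul, abs_of_nonneg hy0']
              exact mul_le_mul_of_nonneg_left this hy0'
          _ ≤ M * (α * |t - s|) := mul_le_of_le_one_left (by positivity) hy1'
      have hT3 : |β * ((β * (s - t)) * u (β * t))| ≤ β * (β * |t - s| * M) := by
        refine pf_mulabs hβ0.le ?_
        calc |β * (s - t) * u (β * t)| = |β * (s - t)| * |u (β * t)| := abs_mul _ _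
          _ ≤ β * |t - s| * M := by
              rw [abs_mul, abs_of_nonneg hβ0.le, abs_sub_comm]
              exact mul_le_mul_of_nonneg_left (hub _) (by positivity)
      have hT4 : |β * ((1 - β * s) * (u (β * t) - u (β * s)))| ≤ β * (M * (β * |t - s|)) := by
        refine pf_mulabs hβ0.le ?_
        have hdarg : |β * t - β * s| = β * |t - s| := by
          rw [show β * t - β * s = β * (t - s) by ring, abs_mul, abs_of_nonneg hβ0.le]
        have := hul (β * t) (β * s)
        rw [hdarg] at this
        calc |(1 - β * s) * (u (β * t) - u (β * s))|
            ≤ (1 - β * s) * (M * (β * |t - s|)) := by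
              rw [abs_mul, abs_of_nonneg (by linarith : (0:ℝ) ≤ 1 - β * s)]
              exact mul_le_mul_of_nonneg_left this (by linarith)
          _ ≤ M * (β * |t - s|) := mul_le_of_le_one_left (by positivity) (by linarith)
      rw [hE]
      have habs4 : |α * ((α * (t - s)) * u (α * t + 1 - α))
            + α * ((α * s + 1 - α) * (u (α * t + 1 - α) - u (α * s + 1 - α)))
            + β * ((β * (s - t)) * u (β * t))
            + β * ((1 - β * s) * (u (β * t) - u (β * s)))|
          ≤ α * (α * |t - s| * M) + α * (M * (α * |t - s|)) + β * (β * |t - s| * M)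
            + β * (M * (β * |t - s|)) := by
        have i1 := abs_add_le (α * ((α * (t - s)) * u (α * t + 1 - α))
            + α * ((α * s + 1 - α) * (u (α * t + 1 - α) - u (α * s + 1 - α)))
            + β * ((β * (s - t)) * u (β * t))) (β * ((1 - β * s) * (u (β * t) - u (β * s))))
        have i2 := abs_add_le (α * ((α * (t - s)) * u (α * t + 1 - α))
            + α * ((α * s + 1 - α) * (u (α * t + 1 - α) - u (α * s + 1 - α))))
            (β * ((β * (s - t)) * u (β * t)))
        have i3 := abs_add_le (α * ((α * (t - s)) * u (α * t + 1 - α)))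
            (α * ((α * s + 1 - α) * (u (α * t + 1 - α) - u (α * s + 1 - α))))
        linarith
      refine habs4.trans ?_
      have hts : |t - s| ≤ |p - q| := hclip
      have hts0 : (0:ℝ) ≤ |t - s| := abs_nonneg _
      have hq : α * (α * |t - s| * M) + α * (M * (α * |t - s|)) + β * (β * |t - s| * M)
          + β * (M * (β * |t - s|)) = 2 * (α * α + β * β) * (M * |t - s|) := by ring
      have h5 : 2 * (α * α + β * β) * (M * |t - s|) ≤ 1 * (M * |t - s|) :=
        mul_le_mul_of_nonneg_right hab (mul_nonneg hM0 hts0)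
      have h6 : M * |t - s| ≤ M * |p - q| := mul_le_mul_of_nonneg_left hts hM0
      linarith
  -- the fixed point
  have hγlt : γ < 1 := by simp only [hγdef]; linarith
  set K : NNReal := ⟨γ, hγ0⟩ with hKdef
  have hcontr : ContractingWith K Φ := by
    constructor
    · exact_mod_cast hγlt
    · exact LipschitzWith.of_dist_le_mul fun u v => hdist u v
  set u : ℝ →ᵇ ℝ := ContractingWith.fixedPoint Φ hcontr with hudef
  have hufix : Φ u = u := hcontr.fixedPoint_isFixedPt
  have htend : Tendsto (fun n => Φ^[n] 0) atTop (nhds u) :=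
    hcontr.tendsto_iterate_fixedPoint 0
  have hiter : ∀ n : ℕ, (∀ p, |(Φ^[n] (0 : ℝ →ᵇ ℝ)) p| ≤ M)
      ∧ (∀ p q, |(Φ^[n] (0 : ℝ →ᵇ ℝ)) p - (Φ^[n] (0 : ℝ →ᵇ ℝ)) q| ≤ M * |p - q|) := by
    intro n
    induction n with
    | zero =>
      constructor
      · intro p; simpa using hM0
      · intro p q; simp; positivity
    | succ n ih =>
      rw [Function.iterate_succ_apply']
      exact hstep _ ih.1 ih.2
  have hpt : ∀ p : ℝ, Tendsto (fun n => (Φ^[n] (0 : ℝ →ᵇ ℝ)) p) atTop (nhds (u p)) :=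
    fun p => ((continuous_eval_const p).tendsto u).comp htend
  have hub : ∀ p, |u p| ≤ M := fun p =>
    le_of_tendsto ((hpt p).abs) (Filter.Eventually.of_forall fun n => (hiter n).1 p)
  have hul : ∀ p q, |u p - u q| ≤ M * |p - q| := fun p q =>
    le_of_tendsto (((hpt p).sub (hpt q)).abs)
      (Filter.Eventually.of_forall fun n => (hiter n).2 p q)
  -- the solution f
  set f : ℝ → ℝ := fun x => x + x * (1 - x) * u x with hfdef
  have hfixpt : ∀ x : ℝ, pfPhiFun α β u x = u x := by
    intro x
    rw [← hcoe]
    exact DFunLike.congr_fun hufix x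
  have hmemy : ∀ x ∈ Set.Icc (0:ℝ) 1, (α * x + 1 - α) ∈ Set.Icc (0:ℝ) 1 := by
    rintro x ⟨hx0, hx1⟩
    constructor
    · nlinarith [mul_nonneg hα.le hx0]
    · nlinarith [mul_le_of_le_one_right hα.le hx1]
  have hmemz : ∀ x ∈ Set.Icc (0:ℝ) 1, (β * x) ∈ Set.Icc (0:ℝ) 1 := by
    rintro x ⟨hx0, hx1⟩
    exact ⟨mul_nonneg hβ0.le hx0, le_trans (mul_le_of_le_one_right hβ0.le hx1) hβ.le⟩
  have hfeq : ∀ x ∈ Set.Icc (0:ℝ) 1, f x = x * f (α * x + 1 - α) + (1 - x) * f (β * x) := by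
    rintro x ⟨hx0, hx1⟩
    have hEq := hfixpt x
    simp only [pfPhiFun, pfClamp_eq hx0 hx1] at hEq
    simp only [hfdef]
    linear_combination (-(x * (1 - x))) * hEq
  have hflip : ∀ x ∈ Set.Icc (0:ℝ) 1, ∀ y ∈ Set.Icc (0:ℝ) 1,
      |f x - f y| ≤ (1 + 2 * M) * |x - y| := by
    rintro x ⟨hx0, hx1⟩ y ⟨hy0, hy1⟩
    have hE : f x - f y = (x - y) + ((x * (1 - x) - y * (1 - y)) * u x
        + y * (1 - y) * (u x - u y)) := by
      simp only [hfdef]; ring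
    have h1 : |x * (1 - x) - y * (1 - y)| ≤ |x - y| := by
      rw [show x * (1 - x) - y * (1 - y) = (x - y) * (1 - x - y) by ring, abs_mul]
      have : |1 - x - y| ≤ 1 := by rw [abs_le]; constructor <;> linarith
      nlinarith [abs_nonneg (x - y)]
    have h2 : |(x * (1 - x) - y * (1 - y)) * u x| ≤ |x - y| * M := by
      rw [abs_mul]
      exact mul_le_mul h1 (hub x) (abs_nonneg _) (abs_nonneg _)
    have h3 : |y * (1 - y) * (u x - u y)| ≤ M * |x - y| := by
      rw [abs_mul, abs_of_nonneg (by nlinarith : (0:ℝ) ≤ y * (1 - y))]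
      calc y * (1 - y) * |u x - u y| ≤ 1 * (M * |x - y|) := by
            refine mul_le_mul (by nlinarith) (hul x y) (abs_nonneg _) zero_le_one
        _ = M * |x - y| := one_mul _
    rw [hE]
    calc |(x - y) + ((x * (1 - x) - y * (1 - y)) * u x + y * (1 - y) * (u x - u y))|
        ≤ |x - y| + |(x * (1 - x) - y * (1 - y)) * u x + y * (1 - y) * (u x - u y)| :=
          abs_add_le _ _
      _ ≤ |x - y| + (|(x * (1 - x) - y * (1 - y)) * u x| + |y * (1 - y) * (u x - u y)|) := by
          have := abs_add_le ((x * (1 - x) - y * (1 - y)) * u x) (y * (1 - y) * (u x - u y))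
          linarith
      _ ≤ (1 + 2 * M) * |x - y| := by nlinarith
  have hf0 : f 0 = 0 := by simp [hfdef]
  have hf1 : f 1 = 1 := by simp [hfdef]
  refine ⟨f, ⟨⟨1 + 2 * M, hflip⟩, hf0, hf1, hfeq⟩, ?_⟩
  -- uniqueness
  rintro g ⟨⟨Kg, hKg⟩, hg0, hg1, hgeq⟩ x hx
  have hKg1 : 1 ≤ Kg := by
    have := hKg 1 ⟨zero_le_one, le_refl 1⟩ 0 ⟨le_refl 0, zero_le_one⟩
    rw [hg0, hg1] at this
    simpa using this
  set C : ℝ := 2 * (Kg + (1 + 2 * M)) with hCdef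
  have hC0 : 0 ≤ C := by simp only [hCdef]; linarith
  have hbase : ∀ y ∈ Set.Icc (0:ℝ) 1, |g y - f y| ≤ C * (y * (1 - y)) := by
    rintro y hy
    obtain ⟨hy0, hy1⟩ := hy
    have e1 : |g y - f y| ≤ (Kg + (1 + 2 * M)) * y := by
      have a1 := hKg y ⟨hy0, hy1⟩ 0 ⟨le_refl 0, zero_le_one⟩
      have a2 := hflip y ⟨hy0, hy1⟩ 0 ⟨le_refl 0, zero_le_one⟩
      rw [hg0] at a1; rw [hf0] at a2
      rw [sub_zero, sub_zero, abs_of_nonneg hy0] at a1 a2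
      calc |g y - f y| ≤ |g y| + |f y| := abs_sub _ _
        _ ≤ (Kg + (1 + 2 * M)) * y := by linarith
    have e2 : |g y - f y| ≤ (Kg + (1 + 2 * M)) * (1 - y) := by
      have a1 := hKg y ⟨hy0, hy1⟩ 1 ⟨zero_le_one, le_refl 1⟩
      have a2 := hflip y ⟨hy0, hy1⟩ 1 ⟨zero_le_one, le_refl 1⟩
      rw [hg1] at a1; rw [hf1] at a2
      have hyy : |y - 1| = 1 - y := by rw [abs_sub_comm, abs_of_nonneg (by linarith)]
      rw [hyy] at a1 a2
      calc |g y - f y| = |(g y - 1) - (f y - 1)| := by rw [sub_sub_sub_cancel_right]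
        _ ≤ |g y - 1| + |f y - 1| := abs_sub _ _
        _ ≤ (Kg + (1 + 2 * M)) * (1 - y) := by linarith
    have hA0 : (0:ℝ) ≤ Kg + (1 + 2 * M) := by linarith
    rcases le_total y (1/2 : ℝ) with hc | hc
    · calc |g y - f y| ≤ (Kg + (1 + 2 * M)) * y := e1
        _ ≤ C * (y * (1 - y)) := by
            simp only [hCdef]
            nlinarith [mul_nonneg (mul_nonneg hA0 hy0) (by linarith : (0:ℝ) ≤ 1 - 2 * y)]
    · calc |g y - f y| ≤ (Kg + (1 + 2 * M)) * (1 - y) := e2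
        _ ≤ C * (y * (1 - y)) := by
            simp only [hCdef]
            nlinarith [mul_nonneg (mul_nonneg hA0 (by linarith : (0:ℝ) ≤ 1 - y))
              (by linarith : (0:ℝ) ≤ 2 * y - 1)]
  have hind : ∀ n : ℕ, ∀ y ∈ Set.Icc (0:ℝ) 1, |g y - f y| ≤ C * γ ^ n * (y * (1 - y)) := by
    intro n
    induction n with
    | zero => intro y hy; simpa using hbase y hy
    | succ n ih =>
      rintro y hy
      obtain ⟨hy0, hy1⟩ := hy
      have hyIcc : y ∈ Set.Icc (0:ℝ) 1 := ⟨hy0, hy1⟩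
      have hymem := hmemy y hyIcc
      have hzmem := hmemz y hyIcc
      have e1 := hgeq y hyIcc
      have e2 := hfeq y hyIcc
      have hE : g y - f y = y * (g (α * y + 1 - α) - f (α * y + 1 - α))
          + (1 - y) * (g (β * y) - f (β * y)) := by
        rw [e1, e2]; ring
      have i1 := ih _ hymem
      have i2 := ih _ hzmem
      have hCg : 0 ≤ C * γ ^ n := by positivity
      have b1 : |y * (g (α * y + 1 - α) - f (α * y + 1 - α))|
          ≤ y * (C * γ ^ n * ((α * y + 1 - α) * (1 - (α * y + 1 - α)))) :=
        pf_mulabs hy0 i1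
      have b2 : |(1 - y) * (g (β * y) - f (β * y))|
          ≤ (1 - y) * (C * γ ^ n * (β * y * (1 - β * y))) :=
        pf_mulabs (by linarith) i2
      obtain ⟨hym0, hym1⟩ := hymem
      obtain ⟨hzm0, hzm1⟩ := hzmem
      have k1 : y * (C * γ ^ n * ((α * y + 1 - α) * (1 - (α * y + 1 - α))))
          ≤ C * γ ^ n * (α * (y * (1 - y))) := by
        have h7 : (α * y + 1 - α) * (1 - (α * y + 1 - α)) ≤ α * (1 - y) := by
          nlinarith [mul_le_mul_of_nonneg_left hym1 (by linarith : (0:ℝ) ≤ 1 - (α * y + 1 - α))]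
        have s1 : C * γ ^ n * ((α * y + 1 - α) * (1 - (α * y + 1 - α)))
            ≤ C * γ ^ n * (α * (1 - y)) := mul_le_mul_of_nonneg_left h7 hCg
        calc y * (C * γ ^ n * ((α * y + 1 - α) * (1 - (α * y + 1 - α))))
            ≤ y * (C * γ ^ n * (α * (1 - y))) := mul_le_mul_of_nonneg_left s1 hy0
          _ = C * γ ^ n * (α * (y * (1 - y))) := by ring
      have k2 : (1 - y) * (C * γ ^ n * (β * y * (1 - β * y)))
          ≤ C * γ ^ n * (β * (y * (1 - y))) := by
        have h7 : β * y * (1 - β * y) ≤ β * y := by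
          nlinarith [mul_le_mul_of_nonneg_left hzm1 (by linarith : (0:ℝ) ≤ β * y)]
        have s1 : C * γ ^ n * (β * y * (1 - β * y)) ≤ C * γ ^ n * (β * y) :=
          mul_le_mul_of_nonneg_left h7 hCg
        calc (1 - y) * (C * γ ^ n * (β * y * (1 - β * y)))
            ≤ (1 - y) * (C * γ ^ n * (β * y)) :=
              mul_le_mul_of_nonneg_left s1 (by linarith)
          _ = C * γ ^ n * (β * (y * (1 - y))) := by ring
      rw [hE]
      calc |y * (g (α * y + 1 - α) - f (α * y + 1 - α))
          + (1 - y) * (g (β * y) - f (β * y))|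
          ≤ |y * (g (α * y + 1 - α) - f (α * y + 1 - α))|
            + |(1 - y) * (g (β * y) - f (β * y))| := abs_add_le _ _
        _ ≤ C * γ ^ n * (α * (y * (1 - y))) + C * γ ^ n * (β * (y * (1 - y))) := by linarith
        _ = C * γ ^ (n + 1) * (y * (1 - y)) := by rw [pow_succ, hγdef]; ring
  have htends : Tendsto (fun n : ℕ => C * γ ^ n * (x * (1 - x))) atTop (nhds 0) := by
    have h0 : Tendsto (fun n : ℕ => γ ^ n) atTop (nhds 0) :=
      tendsto_pow_atTop_nhds_zero_of_lt_one hγ0 hγlt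
    have := (h0.const_mul C).mul_const (x * (1 - x))
    simpa using this
  have hfinal : |g x - f x| ≤ 0 :=
    ge_of_tendsto htends (Filter.Eventually.of_forall fun n => hind n x hx)
  have := abs_nonneg (g x - f x)
  have : |g x - f x| = 0 := le_antisymm hfinal this
  exact sub_eq_zero.mp (abs_eq_zero.mp this)
end

section
/- Let 0 < α < β and b_c = -((2-α)² + β² - 2)/(2(β-α)). Then ∫₀¹ x²(1-x)²·((β²-α²)x + 1 - (2+b_c)α + α² + b_c·β)² dx = (β-α)²(β+α)²/840. -/
theorem residual_integral_at_critical_b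
    (α β : ℝ) (hα : 0 < α) (hαβ : α < β)
    (bc : ℝ) (hbc : bc = -((2 - α) ^ 2 + β ^ 2 - 2) / (2 * (β - α))) :
    ∫ x in (0:ℝ)..1,
        x ^ 2 * (1 - x) ^ 2 *
          ((β ^ 2 - α ^ 2) * x + 1 - (2 + bc) * α + α ^ 2 + bc * β) ^ 2 =
      (β - α) ^ 2 * (β + α) ^ 2 / 840 := by
  have hne : β - α ≠ 0 := sub_ne_zero.mpr hαβ.ne'
  subst hbc
  have hpt : ∀ x : ℝ,
      x ^ 2 * (1 - x) ^ 2 *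
          ((β ^ 2 - α ^ 2) * x + 1 - (2 + (-((2 - α) ^ 2 + β ^ 2 - 2) / (2 * (β - α)))) * α + α ^ 2 + (-((2 - α) ^ 2 + β ^ 2 - 2) / (2 * (β - α))) * β) ^ 2
        = (β - α) ^ 2 * (β + α) ^ 2 *
            (x ^ 6 - 3 * x ^ 5 + 13 / 4 * x ^ 4 - 3 / 2 * x ^ 3 + 1 / 4 * x ^ 2) := by
    intro x
    field_simp
    ring
  simp_rw [hpt]
  rw [intervalIntegral.integral_const_mul]
  have I : ∫ x in (0:ℝ)..1, (x ^ 6 - 3 * x ^ 5 + 13 / 4 * x ^ 4 - 3 / 2 * x ^ 3 + 1 / 4 * x ^ 2) = 1 / 840 := by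
    have h1 : ∀ n : ℕ, IntervalIntegrable (fun x : ℝ => x ^ n) MeasureTheory.volume 0 1 :=
      fun n => (continuous_pow n).intervalIntegrable 0 1
    have h2 : ∀ (c : ℝ) (n : ℕ), IntervalIntegrable (fun x : ℝ => c * x ^ n) MeasureTheory.volume 0 1 :=
      fun c n => (h1 n).const_mul c
    have A : IntervalIntegrable (fun x : ℝ => x ^ 6 - 3 * x ^ 5) MeasureTheory.volume 0 1 := (h1 6).sub (h2 3 5)
    have B : IntervalIntegrable (fun x : ℝ => x ^ 6 - 3 * x ^ 5 + 13 / 4 * x ^ 4) MeasureTheory.volume 0 1 := A.add (h2 (13/4) 4)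
    have C : IntervalIntegrable (fun x : ℝ => x ^ 6 - 3 * x ^ 5 + 13 / 4 * x ^ 4 - 3 / 2 * x ^ 3) MeasureTheory.volume 0 1 := B.sub (h2 (3/2) 3)
    rw [intervalIntegral.integral_add C (h2 (1/4) 2), intervalIntegral.integral_sub B (h2 (3/2) 3),
        intervalIntegral.integral_add A (h2 (13/4) 4), intervalIntegral.integral_sub (h1 6) (h2 3 5),
        intervalIntegral.integral_const_mul, intervalIntegral.integral_const_mul,
        intervalIntegral.integral_const_mul, intervalIntegral.integral_const_mul]
    simp [integral_pow]
    norm_num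
  rw [I]; ring
end
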